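/- Let γ > 0 and let F be a finite graph such that 2e(S) ≤ γ|S| for every S ⊆ V(F). Let F_ℓ be the set of vertices of F of degree at most 2γ. Then 2e(F) ≤ 3·Σ_{v ∈ F_ℓ} deg(v), where e(F) is the total number of edges of F. -/

import Mathlib

open scoped Classical

noncomputable section

namespace UNE

/-- The set of neighbors of a vertex set `S`. -/
def nbrSet {V : Type*} (G : SimpleGraph V) (S : Set V) : Set V :=
  {v | ∃ u ∈ S, G.Adj v u}

/-- The set of unique-neighbors of `S`: vertices with exactly one neighbor in `S`. -/
def uniqueNbrs {V : Type*} (G : SimpleGraph V) (S : Set V) : Set V :=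
  {v | ∃! u, u ∈ S ∧ G.Adj v u}

/-- Degree of a vertex. -/
def deg {V : Type*} (G : SimpleGraph V) (v : V) : ℕ :=
  {u | G.Adj v u}.ncard

/-- `L, R` is a bipartition of `G`. -/
structure IsBipartition {V : Type*} (G : SimpleGraph V) (L R : Set V) : Prop where
  disj : Disjoint L R
  cover : L ∪ R = Set.univ
  cross : ∀ ⦃u v⦄, G.Adj u v → (u ∈ L ∧ v ∈ R) ∨ (u ∈ R ∧ v ∈ L)

/-- `G` is `(c,d)`-biregular with parts `L` and `R`. -/
structure IsBiregular {V : Type*} (G : SimpleGraph V) (L R : Set V) (c d : ℕ)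
    extends IsBipartition G L R : Prop where
  degL : ∀ v ∈ L, deg G v = c
  degR : ∀ v ∈ R, deg G v = d

/-- Adjacency matrix over ℝ. -/
def adjMat {V : Type*} (G : SimpleGraph V) : Matrix V V ℝ :=
  Matrix.of fun u v => if G.Adj u v then (1 : ℝ) else 0

/-- Diagonal degree matrix. -/
def degMat {V : Type*} (G : SimpleGraph V) : Matrix V V ℝ :=
  Matrix.diagonal fun v => (deg G v : ℝ)

/-- Bethe Hessian `H_G(t) = (D - I) t² - t A + I`. -/
def betheHessian {V : Type*} (G : SimpleGraph V) (t : ℝ) : Matrix V V ℝ :=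
  t ^ 2 • (degMat G - 1) - t • adjMat G + 1

/-- The second largest eigenvalue (with multiplicity) of a square real matrix,
read off from the multiset of real roots of its characteristic polynomial. -/
def secondEig {V : Type*} [Fintype V] (A : Matrix V V ℝ) : ℝ :=
  (A.charpoly.roots.sort (· ≤ ·)).getD ((A.charpoly.roots.sort (· ≤ ·)).length - 2) 0

/-- Orientations of edges of `G`. -/
abbrev Orient {V : Type*} (G : SimpleGraph V) : Type _ := {p : V × V // G.Adj p.1 p.2}

/-- The non-backtracking matrix of `G`. -/
def nonBacktracking {V : Type*} (G : SimpleGraph V) : Matrix (Orient G) (Orient G) ℝ :=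
  Matrix.of fun e f => if e.1.2 = f.1.1 ∧ e.1.1 ≠ f.1.2 then (1 : ℝ) else 0

/-- Spectral radius: largest absolute value of a complex eigenvalue. -/
def specRad {n : Type*} [Fintype n] (A : Matrix n n ℝ) : ℝ :=
  (((A.map fun x => (x : ℂ)).charpoly.roots.map fun z => ‖z‖).toList.foldr max 0)

/-- `G` contains a bicycle (connected subgraph with one more edge than vertices)
on at most `ℓ` vertices. -/
def HasBicycle {V : Type*} (G : SimpleGraph V) (ℓ : ℝ) : Prop :=
  ∃ H : G.Subgraph, H.Connected ∧ H.edgeSet.ncard = H.verts.ncard + 1 ∧ (H.verts.ncard : ℝ) ≤ ℓ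

/-- `G` contains a cycle of length at most `ℓ`. -/
def HasCycleLe {V : Type*} (G : SimpleGraph V) (ℓ : ℝ) : Prop :=
  ∃ (v : V) (w : G.Walk v v), w.IsCycle ∧ (w.length : ℝ) ≤ ℓ

/-- Number of edges of `G` with both endpoints in `S`. -/
def eInside {V : Type*} (G : SimpleGraph V) (S : Set V) : ℕ :=
  {e ∈ G.edgeSet | ∀ v ∈ e, v ∈ S}.ncard

/-- Number of edges of `G` with one endpoint in `S` and the other in `T`. -/
def eBetween {V : Type*} (G : SimpleGraph V) (S T : Set V) : ℕ :=
  {e ∈ G.edgeSet | ∃ u ∈ S, ∃ v ∈ T, e = s(u, v)}.ncard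

/-- Unique-neighbor expansion profile `P_H(t)`. -/
def profile {V : Type*} (H : SimpleGraph V) (t : ℝ) : ℝ :=
  sInf {r | ∃ S : Set V, S.Nonempty ∧ (S.ncard : ℝ) ≤ t ∧
    r = ((uniqueNbrs H S).ncard : ℝ) / (S.ncard : ℝ)}

/-!
Let `H` be the set of vertices of degree more than `2γ`. Counting the degrees in `H` edge by
edge, `∑_H deg = 2 e(H) + e(H, Hᶜ) ≤ 2 e(H) + ∑_{Hᶜ} deg`, while sparsity applied to `H` gives
`2 e(H) ≤ γ |H| ≤ (∑_H deg) / 2`. Hence `∑_H deg ≤ 2 ∑_{Hᶜ} deg`, and the handshake lemma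
`2 e(F) = ∑_H deg + ∑_{Hᶜ} deg` finishes the proof.
-/

section DegreeSums

open SimpleGraph Finset

variable {V : Type*} [Fintype V] (G : SimpleGraph V) [DecidableRel G.Adj]

theorem deg_eq_degree (v : V) : deg G v = G.degree v := by
  rw [deg, ← card_neighborFinset_eq_degree, ← Set.ncard_coe_finset]
  congr 1
  ext u
  simp

variable [DecidableEq V]

theorem eInside_coe_eq_card_edgeFinset_induce (s : Finset V) :
    eInside G s = #(G.induce s).edgeFinset := by
  rw [← card_filter_edgeFinset_toFinset_subset, eInside, ← Set.ncard_coe_finset]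
  congr 1
  ext e
  simp [Finset.subset_iff]

theorem two_mul_eInside_coe (s : Finset V) :
    2 * eInside G s = ∑ v ∈ s, #{u ∈ s | G.Adj v u} := by
  rw [eInside_coe_eq_card_edgeFinset_induce, ← sum_degrees_eq_twice_card_edges,
    ← Finset.sum_coe_sort s]
  refine Fintype.sum_congr _ _ fun v => ?_
  have h := congrArg Finset.card (map_neighborFinset_induce (G := G) (s := (s : Set V)) v)
  rw [card_map, card_neighborFinset_eq_degree] at h
  convert h using 2
  ext u
  simp [and_comm]

theorem degree_eq_card_adj_add_card_adj_compl (s : Finset V) (v : V) :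
    G.degree v = #{u ∈ s | G.Adj v u} + #{u ∈ sᶜ | G.Adj v u} := by
  rw [← card_union_of_disjoint (disjoint_filter_filter disjoint_compl_right), ← filter_union,
    union_compl, ← card_neighborFinset_eq_degree, neighborFinset_eq_filter]

theorem sum_degree_le_two_mul_eInside_add_sum_compl (s : Finset V) :
    ∑ v ∈ s, G.degree v ≤ 2 * eInside G s + ∑ u ∈ sᶜ, G.degree u :=
  calc ∑ v ∈ s, G.degree v
      = 2 * eInside G s + ∑ v ∈ s, #{u ∈ sᶜ | G.Adj v u} := by
        simp only [degree_eq_card_adj_add_card_adj_compl G s, sum_add_distrib,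
          two_mul_eInside_coe]
    _ = 2 * eInside G s + ∑ u ∈ sᶜ, #{v ∈ s | G.Adj v u} := by
        exact congrArg _ (sum_card_bipartiteAbove_eq_sum_card_bipartiteBelow _)
    _ ≤ 2 * eInside G s + ∑ u ∈ sᶜ, G.degree u := by
        gcongr with u
        rw [← card_neighborFinset_eq_degree]
        exact card_le_card fun v hv => by simpa [adj_comm] using (mem_filter.1 hv).2

theorem sum_degree_le_two_mul_sum_compl {γ : ℝ} (s : Finset V)
    (hsparse : 2 * (eInside G s : ℝ) ≤ γ * #s) (hhigh : ∀ v ∈ s, 2 * γ ≤ G.degree v) :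
    ∑ v ∈ s, (G.degree v : ℝ) ≤ 2 * ∑ u ∈ sᶜ, (G.degree u : ℝ) := by
  have hsum : ∑ v ∈ s, (G.degree v : ℝ) ≤ 2 * eInside G s + ∑ u ∈ sᶜ, (G.degree u : ℝ) := by
    exact_mod_cast sum_degree_le_two_mul_eInside_add_sum_compl G s
  have hcard : #s • (2 * γ) ≤ ∑ v ∈ s, (G.degree v : ℝ) := card_nsmul_le_sum s _ _ hhigh
  rw [nsmul_eq_mul] at hcard
  linarith

end DegreeSums

theorem edges_incident_to_low_degree_general {V : Type} [Fintype V] (F : SimpleGraph V)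
    (γ : ℝ)
    (hF : ∀ S : Set V, 2 * (eInside F S : ℝ) ≤ γ * (S.ncard : ℝ)) :
    2 * (F.edgeSet.ncard : ℝ) ≤
      3 * ∑ v ∈ Finset.univ.filter (fun v => (deg F v : ℝ) ≤ 2 * γ), (deg F v : ℝ) := by
  set high := Finset.univ.filter fun v => ¬(deg F v : ℝ) ≤ 2 * γ
  have hlow : highᶜ = Finset.univ.filter fun v => (deg F v : ℝ) ≤ 2 * γ := by
    simp only [high, Finset.compl_filter, not_not]
  have hhandshake : 2 * (F.edgeSet.ncard : ℝ) = ∑ v, (deg F v : ℝ) := by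
    rw [← SimpleGraph.coe_edgeFinset, Set.ncard_coe_finset]
    simp only [deg_eq_degree]
    exact_mod_cast F.sum_degrees_eq_twice_card_edges.symm
  have hhigh : ∑ v ∈ high, (deg F v : ℝ) ≤ 2 * ∑ v ∈ highᶜ, (deg F v : ℝ) := by
    simp only [deg_eq_degree]
    refine sum_degree_le_two_mul_sum_compl F high (by simpa using hF high) fun v hv => ?_
    rw [← deg_eq_degree]
    exact (not_le.1 (Finset.mem_filter.1 hv).2).le
  rw [hhandshake, ← Finset.sum_add_sum_compl high, ← hlow]
  linarith

/-- Lemma `lem:most-low`: if every vertex subset of `F` spans at most `γ|S|/2` edges,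
then most edges are incident to vertices of degree at most `2γ`. -/
theorem edges_incident_to_low_degree {V : Type} [Fintype V] (F : SimpleGraph V)
    (γ : ℝ) (hγ : 0 < γ)
    (hF : ∀ S : Set V, 2 * (eInside F S : ℝ) ≤ γ * (S.ncard : ℝ)) :
    2 * (F.edgeSet.ncard : ℝ) ≤
      3 * ∑ v ∈ Finset.univ.filter (fun v => (deg F v : ℝ) ≤ 2 * γ), (deg F v : ℝ) :=
  edges_incident_to_low_degree_general F γ hF

end UNE
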